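/- arXiv:2301.09675 — 5 statements merged into one kernel-verified Lean document; each statement's English description precedes it below -/
import Mathlib

section
/- (Coupling step 1.) Under the stated one-inner-step setup, for every u ∈ ℝ^l: α_s ⟨∇φ(v_{k+1}), z_k − u⟩ ≤ (α_s/τ_{1,s}) · { φ(v_{k+1}) − E[φ(y_{k+1})] + τ₂ φ(ṽ^s) − τ₂ φ(v_{k+1}) − τ₂ ⟨∇φ(v_{k+1}), ṽ^s − v_{k+1}⟩ } + V_{z_k}(u) − E[V_{z_{k+1}}(u)]. -/
open scoped RealInnerProductSpace BigOperators

/-!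
Fix a sample `i` and write `z' = z_{k+1}(i)`, `y' = y_{k+1}(i)`, `v = v_{k+1}`, `∇̃ = ∇̃_{k+1}(i)`.
The optimality condition of the mirror step, `∇w(z') = ∇w(z_k) − α ∇̃`, turns
`α ⟨∇̃, z' − u⟩` into `V_{z_k}(u) − V_{z'}(u) − V_{z_k}(z')` (three-point identity). The remaining
`α ⟨∇̃, z_k − z'⟩ − V_{z_k}(z')` is, by strong convexity of `w` and by testing the proximal step
at `v + τ₁ (z' − z_k)`, at most `α/τ₁` times the proximal gap
`⟨∇̃, v − y'⟩ − (9L̄/2) ‖y' − v‖²`; the descent lemma for `φ` and Young's inequality bound that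
gap by `φ(v) − φ(y') + ‖∇̃ − ∇φ(v)‖²_* / (16 L̄)`.

Averaging over `i`, the estimator is unbiased, and its second moment about the mean is at most
`4` (no variance decomposition is available for a general norm) times the one about `∇φ(ṽ)`, which
co-coercivity of the `∇φ_i` in the dual norm bounds by `2 L̄ D`, where
`D = φ(ṽ) − φ(v) − ⟨∇φ(v), ṽ − v⟩`. So the variance term contributes `D / 2 = τ₂ D`.
Co-coercivity tests smoothness in a direction where the dual norm is attained; this is where
finite dimension (compactness of the unit ball of `‖·‖_H`) enters.
-/

open Set

section Bregman

variable {E : Type*} [NormedAddCommGroup E] [InnerProductSpace ℝ E]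

/-- The Bregman divergence `V_x(y)` of `f`, with the gradient of `f` supplied as the field `g`. -/
def bregmanDiv (f : E → ℝ) (g : E → E) (x y : E) : ℝ := f y - f x - ⟪g x, y - x⟫

lemma bregmanDiv_three_point (f : E → ℝ) (g : E → E) (x z u : E) :
    ⟪g x - g z, z - u⟫ = bregmanDiv f g x u - bregmanDiv f g z u - bregmanDiv f g x z := by
  simp only [bregmanDiv, inner_sub_left, inner_sub_right]
  ring

lemma inner_sub_sub_sq_le_of_prox_step {p : Seminorm ℝ E} {L τ α : ℝ} {c v y' z z' : E}
    (hL : 0 < L) (hτ : 0 < τ) (hα : α = 1 / (9 * τ * L))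
    (hy' : ∀ y, 9 * L / 2 * p (y' - v) ^ 2 + ⟪c, y'⟫ ≤ 9 * L / 2 * p (y - v) ^ 2 + ⟪c, y⟫) :
    α * ⟪c, z - z'⟫ - 1 / 2 * p (z' - z) ^ 2
      ≤ α / τ * (⟪c, v - y'⟫ - 9 * L / 2 * p (y' - v) ^ 2) := by
  -- the coupling: compare `y'` with `v + τ (z' - z)`
  have h := hy' (v + τ • (z' - z))
  rw [add_sub_cancel_left, map_smul_eq_mul, Real.norm_eq_abs, abs_of_pos hτ, inner_add_right,
    real_inner_smul_right] at h
  have key : α / τ * (9 * L / 2 * (τ * p (z' - z)) ^ 2 + τ * ⟪c, z' - z⟫)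
      = α * ⟪c, z' - z⟫ + 1 / 2 * p (z' - z) ^ 2 := by
    subst hα; field_simp; ring
  have := mul_le_mul_of_nonneg_left h (div_nonneg (hα ▸ by positivity : 0 ≤ α) hτ.le)
  rw [inner_sub_right, inner_sub_right] at *
  linarith

variable [CompleteSpace E]

lemma HasGradientAt.hasDerivAt_comp_add_smul {f : E → ℝ} {g x d : E} {t : ℝ}
    (hf : HasGradientAt f g (x + t • d)) :
    HasDerivAt (fun s : ℝ => f (x + s • d)) ⟪g, d⟫ t := by
  simpa [Function.comp_def] using (hasGradientAt_iff_hasFDerivAt.1 hf).comp_hasDerivAt t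
    (((hasDerivAt_id t).smul_const d).const_add x)

lemma HasGradientAt.eq_of_forall_sub_inner_le {f : E → ℝ} {g a z : E} (hf : HasGradientAt f g z)
    (hmin : ∀ y, f z - ⟪a, z⟫ ≤ f y - ⟪a, y⟫) : g = a := by
  have hF : HasFDerivAt (fun y => f y - ⟪a, y⟫) (InnerProductSpace.toDual ℝ E (g - a)) z := by
    rw [map_sub]
    exact (hasGradientAt_iff_hasFDerivAt.1 hf).sub (InnerProductSpace.toDual ℝ E a).hasFDerivAt
  have hmin' : IsLocalMin (fun y => f y - ⟪a, y⟫) z := Filter.Eventually.of_forall hmin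
  exact sub_eq_zero.1
    ((InnerProductSpace.toDual ℝ E).map_eq_zero_iff.1 (hmin'.hasFDerivAt_eq_zero hF))

lemma ConvexOn.bregmanDiv_nonneg {f : E → ℝ} {g : E → E} (hf : ConvexOn ℝ univ f) {x : E}
    (hg : HasGradientAt f (g x) x) (y : E) : 0 ≤ bregmanDiv f g x y := by
  have hline : ConvexOn ℝ univ (fun t : ℝ => f (x + t • (y - x))) :=
    (hf.comp_affineMap (AffineMap.lineMap x y)).congr fun t _ => by
      simp [AffineMap.lineMap_apply_module', add_comm]
  have := hline.le_slope_of_hasDerivAt (mem_univ 0) (mem_univ 1) one_pos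
    (HasGradientAt.hasDerivAt_comp_add_smul (by simpa using hg))
  simp only [slope_def_field, one_smul, add_sub_cancel, zero_smul, add_zero, sub_zero, div_one]
    at this
  simp only [bregmanDiv]
  linarith

lemma gradient_eq_sub_smul_of_mirror_step {w : E → ℝ} {gw : E → E}
    (hw : ∀ x, HasGradientAt w (gw x) x) {α : ℝ} (hα : 0 < α) {x c z : E}
    (hz : ∀ y, 1 / α * bregmanDiv w gw x z + ⟪c, z⟫ ≤ 1 / α * bregmanDiv w gw x y + ⟪c, y⟫) :
    gw z = gw x - α • c :=
  (hw z).eq_of_forall_sub_inner_le fun y => by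
    have := mul_le_mul_of_nonneg_left (hz y) hα.le
    simp only [bregmanDiv, mul_add, mul_sub, ← mul_assoc, mul_one_div_cancel hα.ne', one_mul,
      inner_sub_left, inner_sub_right, real_inner_smul_left] at this ⊢
    linarith

end Bregman

section FiniteSum

variable {E : Type*} [NormedAddCommGroup E] [InnerProductSpace ℝ E] {m : ℕ}
  {φi : Fin m → E → ℝ} {gφi : Fin m → E → E} {φ : E → ℝ} {gφ : E → E}

lemma hasGradientAt_of_eq_average [CompleteSpace E] (h : ∀ i x, HasGradientAt (φi i) (gφi i x) x)
    (hφ : ∀ x, φ x = (1 / m : ℝ) * ∑ i, φi i x) (hgφ : ∀ x, gφ x = (m : ℝ)⁻¹ • ∑ i, gφi i x)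
    (x : E) : HasGradientAt φ (gφ x) x := by
  rw [funext hφ, hgφ, hasGradientAt_iff_hasFDerivAt, map_smulₛₗ, map_sum]
  simpa using (HasFDerivAt.fun_sum fun i _ => hasGradientAt_iff_hasFDerivAt.1 (h i x)).const_mul
    (1 / m : ℝ)

lemma Seminorm.sub_le_of_eq_average {p q : Seminorm ℝ E} {L : Fin m → ℝ}
    (hg : ∀ i x y, q (gφi i x - gφi i y) ≤ L i * p (x - y))
    (hgφ : ∀ x, gφ x = (m : ℝ)⁻¹ • ∑ i, gφi i x) (x y : E) :
    q (gφ x - gφ y) ≤ (∑ i, L i) / m * p (x - y) := by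
  rw [hgφ, hgφ, ← smul_sub, ← Finset.sum_sub_distrib, map_smul_eq_mul, norm_inv,
    Real.norm_natCast, div_mul_eq_mul_div, Finset.sum_mul, inv_mul_eq_div]
  gcongr
  exact (Finset.le_sum_of_subadditive q (map_zero q).le (map_add_le_add q) _ _).trans
    (Finset.sum_le_sum fun i _ => hg i x y)

lemma bregmanDiv_of_eq_average (hφ : ∀ x, φ x = (1 / m : ℝ) * ∑ i, φi i x)
    (hgφ : ∀ x, gφ x = (m : ℝ)⁻¹ • ∑ i, gφi i x) (x y : E) :
    bregmanDiv φ gφ x y = (1 / m : ℝ) * ∑ i, bregmanDiv (φi i) (gφi i) x y := by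
  simp only [bregmanDiv, hφ, hgφ, real_inner_smul_left, sum_inner, Finset.sum_sub_distrib]
  ring

end FiniteSum

section WeightedSums

variable {F : Type*} [AddCommGroup F] [Module ℝ F]

lemma Seminorm.sum_mul_sq_sub_sum_smul_le {ι : Type*} (q : Seminorm ℝ F) (s : Finset ι)
    {w : ι → ℝ} (hw₀ : ∀ i ∈ s, 0 ≤ w i) (hw₁ : ∑ i ∈ s, w i = 1) (c : ι → F) (b : F) :
    ∑ i ∈ s, w i * q (c i - ∑ j ∈ s, w j • c j) ^ 2 ≤ 4 * ∑ i ∈ s, w i * q (c i - b) ^ 2 := by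
  set M := ∑ j ∈ s, w j • c j
  have hM : M - b = ∑ j ∈ s, w j • (c j - b) := by
    simp only [M, smul_sub, Finset.sum_sub_distrib, ← Finset.sum_smul, hw₁, one_smul]
  have hjensen : q (M - b) ^ 2 ≤ ∑ i ∈ s, w i * q (c i - b) ^ 2 := hM ▸
    (q.convexOn.pow (fun x _ => apply_nonneg q x) 2).map_sum_le hw₀ hw₁ fun _ _ => mem_univ _
  have hpt : ∀ i, q (c i - M) ^ 2 ≤ 2 * q (c i - b) ^ 2 + 2 * q (M - b) ^ 2 := fun i => by
    have := pow_le_pow_left₀ (apply_nonneg q _) (map_sub_le_add q (c i - b) (M - b)) 2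
    rw [sub_sub_sub_cancel_right] at this
    nlinarith [sq_nonneg (q (c i - b) - q (M - b))]
  calc ∑ i ∈ s, w i * q (c i - M) ^ 2
      ≤ ∑ i ∈ s, w i * (2 * q (c i - b) ^ 2 + 2 * q (M - b) ^ 2) :=
        Finset.sum_le_sum fun i hi => mul_le_mul_of_nonneg_left (hpt i) (hw₀ i hi)
    _ = 2 * ∑ i ∈ s, w i * q (c i - b) ^ 2 + 2 * q (M - b) ^ 2 := by
        simp only [mul_add, Finset.sum_add_distrib, ← Finset.sum_mul, hw₁, Finset.mul_sum]
        ring_nf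
    _ ≤ 4 * ∑ i ∈ s, w i * q (c i - b) ^ 2 := by linarith

variable {m : ℕ} {pr : Fin m → ℝ}

lemma importance_weights_pos_sum_eq_one (hm : 0 < m) {L : Fin m → ℝ} {Lbar : ℝ}
    (hL : ∀ i, 0 < L i) (hLbar : Lbar = (∑ i, L i) / m) (hpr : ∀ i, pr i = L i / (m * Lbar)) :
    0 < Lbar ∧ (∀ i, 0 < pr i) ∧ ∑ i, pr i = 1 := by
  have hLsum : 0 < ∑ i, L i := Finset.sum_pos (fun i _ => hL i) ⟨⟨0, hm⟩, Finset.mem_univ _⟩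
  have hLbar₀ : 0 < Lbar := hLbar ▸ div_pos hLsum (Nat.cast_pos.2 hm)
  refine ⟨hLbar₀, fun i => hpr i ▸ by have := hL i; positivity, ?_⟩
  simp_rw [hpr]
  rw [← Finset.sum_div, hLbar, mul_div_cancel₀ _ (Nat.cast_ne_zero.2 hm.ne' : (m : ℝ) ≠ 0)]
  exact div_self hLsum.ne'

lemma sum_smul_importance_estimator (hpr₀ : ∀ i, pr i ≠ 0) (hpr₁ : ∑ i, pr i = 1) (b : F)
    (a : Fin m → F) :
    ∑ i, pr i • (b + (1 / (m * pr i)) • a i) = b + (m : ℝ)⁻¹ • ∑ i, a i := by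
  simp only [smul_add, smul_smul, Finset.sum_add_distrib, ← Finset.sum_smul, hpr₁, one_smul,
    Finset.smul_sum]
  congr 1
  refine Finset.sum_congr rfl fun i _ => ?_
  have := hpr₀ i
  have : (m : ℝ) ≠ 0 := Nat.cast_ne_zero.2 i.pos.ne'
  congr 1
  field_simp

lemma Seminorm.sum_mul_sq_importance_le (q : Seminorm ℝ F) {L : Fin m → ℝ} {Lbar : ℝ}
    (hL : ∀ i, 0 < L i) (hLbar : 0 < Lbar) (hpr : ∀ i, pr i = L i / (m * Lbar)) {a : Fin m → F}
    {D : Fin m → ℝ} (ha : ∀ i, q (a i) ^ 2 ≤ 2 * L i * D i) :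
    ∑ i, pr i * q ((1 / (m * pr i)) • a i) ^ 2 ≤ 2 * Lbar * (1 / m * ∑ i, D i) := by
  rw [Finset.mul_sum, Finset.mul_sum]
  refine Finset.sum_le_sum fun i _ => ?_
  have := hL i
  have : (0 : ℝ) < m := Nat.cast_pos.2 i.pos
  calc pr i * q ((1 / (m * pr i)) • a i) ^ 2 = Lbar / (m * L i) * q (a i) ^ 2 := by
        rw [map_smul_eq_mul, hpr, Real.norm_eq_abs, abs_of_pos (by positivity)]
        field_simp
    _ ≤ Lbar / (m * L i) * (2 * L i * D i) := by gcongr; exact ha i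
    _ = 2 * Lbar * (1 / m * D i) := by field_simp

end WeightedSums

theorem inner_le_of_unbiased_of_variance_le {E ι : Type*} [NormedAddCommGroup E]
    [InnerProductSpace ℝ E] [Fintype ι] {pr : ι → ℝ} (hpr₀ : ∀ i, 0 ≤ pr i)
    (hpr₁ : ∑ i, pr i = 1) {q : Seminorm ℝ E} {φ : E → ℝ} {gφ : E → E} {V : E → E → ℝ}
    {α τ L D : ℝ} (hα : 0 ≤ α / τ) (hL : 0 < L) {v z₀ u : E} {c y z : ι → E}
    (hstep : ∀ i, α * ⟪c i, z₀ - u⟫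
      ≤ α / τ * (φ v - φ (y i) + 1 / (16 * L) * q (c i - gφ v) ^ 2) + V z₀ u - V (z i) u)
    (hmean : ∑ i, pr i • c i = gφ v) (hvar : ∑ i, pr i * q (c i - gφ v) ^ 2 ≤ 8 * L * D) :
    α * ⟪gφ v, z₀ - u⟫
      ≤ α / τ * (φ v - ∑ i, pr i * φ (y i) + D / 2) + V z₀ u - ∑ i, pr i * V (z i) u := by
  have hsum := Finset.sum_le_sum fun i (_ : i ∈ Finset.univ) =>
    mul_le_mul_of_nonneg_left (hstep i) (hpr₀ i)
  have hlhs : ∑ i, pr i * ⟪c i, z₀ - u⟫ = ⟪gφ v, z₀ - u⟫ := by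
    simp only [← hmean, sum_inner, real_inner_smul_left]
  have hvar' : α / τ * (1 / (16 * L) * ∑ i, pr i * q (c i - gφ v) ^ 2) ≤ α / τ * (D / 2) := by
    gcongr
    calc 1 / (16 * L) * ∑ i, pr i * q (c i - gφ v) ^ 2 ≤ 1 / (16 * L) * (8 * L * D) := by gcongr
      _ = D / 2 := by field_simp; ring
  simp only [mul_add, mul_sub, Finset.sum_add_distrib, Finset.sum_sub_distrib, ← Finset.sum_mul,
    hpr₁, mul_left_comm (pr _), ← Finset.mul_sum, hlhs] at hsum
  linarith

section DualNorm

variable {E : Type*} [NormedAddCommGroup E] [InnerProductSpace ℝ E]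

namespace Seminorm

noncomputable def dualNorm (p : Seminorm ℝ E) (u : E) : ℝ :=
  sSup ((fun v => ⟪u, v⟫) '' {v | p v ≤ 1})

lemma dualNorm_le {p : Seminorm ℝ E} {u : E} {b : ℝ} (h : ∀ v, p v ≤ 1 → ⟪u, v⟫ ≤ b) :
    p.dualNorm u ≤ b :=
  csSup_le ⟨_, 0, by simp, rfl⟩ (by rintro _ ⟨v, hv, rfl⟩; exact h v hv)

variable [FiniteDimensional ℝ E] (p : Seminorm ℝ E)

protected lemma continuous_of_finiteDimensional : Continuous p :=
  continuousOn_univ.1 (p.convexOn.continuousOn isOpen_univ)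

lemma exists_pos_mul_norm_le (hp : ∀ x, p x = 0 → x = 0) : ∃ c > 0, ∀ x, c * ‖x‖ ≤ p x := by
  obtain ⟨c, hc, hcp⟩ := (isCompact_sphere (0 : E) 1).exists_forall_le'
    p.continuous_of_finiteDimensional.continuousOn (a := 0) fun x hx =>
      (apply_nonneg p x).lt_of_ne' fun h => by simp [hp x h] at hx
  refine ⟨c, hc, fun x => ?_⟩
  rcases eq_or_ne x 0 with rfl | hx
  · simp
  have hxpos : 0 < ‖x‖ := norm_pos_iff.2 hx
  have := hcp (‖x‖⁻¹ • x) (by simp [norm_smul, hxpos.ne'])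
  rw [map_smul_eq_mul, norm_inv, norm_norm, le_inv_mul_iff₀ hxpos] at this
  linarith

lemma isCompact_setOf_le_one (hp : ∀ x, p x = 0 → x = 0) : IsCompact {v | p v ≤ 1} := by
  obtain ⟨c, hc, hcp⟩ := p.exists_pos_mul_norm_le hp
  refine (isCompact_closedBall (0 : E) c⁻¹).of_isClosed_subset
    (isClosed_le p.continuous_of_finiteDimensional continuous_const) fun v hv => ?_
  rw [mem_closedBall_zero_iff, ← mul_one c⁻¹, le_inv_mul_iff₀ hc]
  exact (hcp v).trans hv

variable {p}

lemma exists_inner_eq_dualNorm (hp : ∀ x, p x = 0 → x = 0) (u : E) :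
    ∃ v, p v ≤ 1 ∧ ⟪u, v⟫ = p.dualNorm u :=
  ((p.isCompact_setOf_le_one hp).image (continuous_const.inner continuous_id)).sSup_mem
    ⟨_, 0, by simp, rfl⟩

lemma inner_le_dualNorm (hp : ∀ x, p x = 0 → x = 0) {u v : E} (hv : p v ≤ 1) :
    ⟪u, v⟫ ≤ p.dualNorm u :=
  le_csSup ((p.isCompact_setOf_le_one hp).image (continuous_const.inner continuous_id)).bddAbove
    ⟨v, hv, rfl⟩

lemma abs_inner_le_dualNorm (hp : ∀ x, p x = 0 → x = 0) {u v : E} (hv : p v ≤ 1) :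
    |⟪u, v⟫| ≤ p.dualNorm u := by
  refine abs_le.2 ⟨?_, inner_le_dualNorm hp hv⟩
  have := inner_le_dualNorm (u := u) hp (v := -v) (by rwa [map_neg_eq_map])
  rw [inner_neg_right] at this
  linarith

noncomputable def dual (hp : ∀ x, p x = 0 → x = 0) : Seminorm ℝ E :=
  Seminorm.ofSMulLE p.dualNorm
    (le_antisymm (dualNorm_le fun v _ => by simp)
      (by simpa using inner_le_dualNorm (u := 0) hp (v := 0) (by simp)))
    (fun u u' => dualNorm_le fun v hv => by
      rw [inner_add_left]
      exact add_le_add (inner_le_dualNorm hp hv) (inner_le_dualNorm hp hv))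
    (fun r u => dualNorm_le fun v hv => by
      rw [real_inner_smul_left, Real.norm_eq_abs]
      refine (le_abs_self _).trans ?_
      rw [abs_mul]
      exact mul_le_mul_of_nonneg_left (abs_inner_le_dualNorm hp hv) (abs_nonneg r))

lemma dual_apply (hp : ∀ x, p x = 0 → x = 0) (u : E) : p.dual hp u = p.dualNorm u := rfl

lemma inner_le_dual_mul (hp : ∀ x, p x = 0 → x = 0) (u x : E) :
    ⟪u, x⟫ ≤ p.dual hp u * p x := by
  rcases (apply_nonneg p x).eq_or_lt with h | h
  · simp [hp x h.symm]
  have := inner_le_dualNorm (u := u) hp (v := (p x)⁻¹ • x) (by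
    rw [map_smul_eq_mul, Real.norm_eq_abs, abs_inv, abs_of_pos h, inv_mul_cancel₀ h.ne'])
  rwa [real_inner_smul_right, inv_mul_le_iff₀ h, mul_comm] at this

end Seminorm

variable [FiniteDimensional ℝ E] {p : Seminorm ℝ E} {hp : ∀ x, p x = 0 → x = 0} {f : E → ℝ}
  {g : E → E} {L : ℝ}

theorem le_add_inner_add_sq_of_dual_le (hf : ∀ x, HasGradientAt f (g x) x)
    (hg : ∀ x y, p.dual hp (g x - g y) ≤ L * p (x - y)) (x y : E) :
    f y ≤ f x + ⟪g x, y - x⟫ + L / 2 * p (y - x) ^ 2 := by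
  set d := y - x
  let ψ t := f (x + t • d) - t * ⟪g x, d⟫ - L / 2 * t ^ 2 * p d ^ 2
  have hψ : ∀ t, HasDerivAt ψ (⟪g (x + t • d), d⟫ - ⟪g x, d⟫ - L * t * p d ^ 2) t := fun t => by
    have := ((HasGradientAt.hasDerivAt_comp_add_smul (x := x) (d := d) (hf _)).sub
      ((hasDerivAt_id t).mul_const ⟪g x, d⟫)).sub
        (((hasDerivAt_pow 2 t).const_mul (L / 2)).mul_const (p d ^ 2))
    exact this.congr_deriv (by push_cast; ring)
  have hanti : AntitoneOn ψ (Ici 0) := by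
    refine antitoneOn_of_hasDerivWithinAt_nonpos (convex_Ici 0)
      (fun t _ => (hψ t).continuousAt.continuousWithinAt) (fun t _ => (hψ t).hasDerivWithinAt)
      fun t ht => ?_
    rw [interior_Ici, mem_Ioi] at ht
    have hcs := Seminorm.inner_le_dual_mul hp (g (x + t • d) - g x) d
    have hlip := mul_le_mul_of_nonneg_right (hg (x + t • d) x) (apply_nonneg p d)
    rw [add_sub_cancel_left, map_smul_eq_mul, Real.norm_eq_abs, abs_of_pos ht] at hlip
    rw [inner_sub_left] at hcs
    nlinarith
  have := hanti self_mem_Ici (mem_Ici.2 zero_le_one) zero_le_one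
  simp only [ψ, d, one_smul, zero_smul, add_zero, add_sub_cancel, one_mul, one_pow, mul_one,
    zero_mul, sub_zero, zero_pow two_ne_zero, mul_zero] at this
  linarith

theorem dual_sq_le_two_mul_bregmanDiv (hconv : ConvexOn ℝ univ f)
    (hf : ∀ x, HasGradientAt f (g x) x) (hg : ∀ x y, p.dual hp (g x - g y) ≤ L * p (x - y))
    (hL : 0 < L) (x y : E) : p.dual hp (g y - g x) ^ 2 ≤ 2 * L * bregmanDiv f g x y := by
  -- test the smoothness of `f` at `y` in a direction `v` where the dual norm is attained
  obtain ⟨v, hv, hvD⟩ := Seminorm.exists_inner_eq_dualNorm hp (g y - g x)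
  set D := p.dual hp (g y - g x) with hD
  set t := D / L with ht_def
  have ht : 0 ≤ t := div_nonneg (apply_nonneg _ _) hL.le
  have hconvx := hconv.bregmanDiv_nonneg (hf x) (y - t • v)
  have hdesc := le_add_inner_add_sq_of_dual_le hf hg y (y - t • v)
  have hstep : p (y - t • v - y) ^ 2 ≤ t ^ 2 := by
    rw [sub_sub_cancel_left, map_neg_eq_map, map_smul_eq_mul, Real.norm_eq_abs, abs_of_nonneg ht]
    exact pow_le_pow_left₀ (by positivity) (mul_le_of_le_one_right ht hv) 2
  have hgap : t * D - L / 2 * t ^ 2 ≤ bregmanDiv f g x y := by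
    rw [← Seminorm.dual_apply hp, ← hD, inner_sub_left] at hvD
    simp only [bregmanDiv, sub_sub_cancel_left, sub_right_comm y (t • v) x, inner_sub_right,
      inner_neg_right, real_inner_smul_right] at hconvx hdesc hstep ⊢
    nlinarith
  calc D ^ 2 = 2 * L * (t * D - L / 2 * t ^ 2) := by rw [ht_def]; field_simp; ring
    _ ≤ 2 * L * bregmanDiv f g x y := by gcongr

lemma inner_sub_sub_sq_le_of_descent {c v y' : E} {φ : E → ℝ} {gφ : E → E} (hL : 0 < L)
    (hdesc : φ y' ≤ φ v + ⟪gφ v, y' - v⟫ + L / 2 * p (y' - v) ^ 2) :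
    ⟪c, v - y'⟫ - 9 * L / 2 * p (y' - v) ^ 2
      ≤ φ v - φ y' + 1 / (16 * L) * p.dual hp (c - gφ v) ^ 2 := by
  have hcs := Seminorm.inner_le_dual_mul hp (c - gφ v) (v - y')
  rw [map_sub_rev p, inner_sub_left] at hcs
  have hyoung : p.dual hp (c - gφ v) * p (y' - v)
      ≤ 1 / (16 * L) * p.dual hp (c - gφ v) ^ 2 + 4 * L * p (y' - v) ^ 2 := by
    have := sq_nonneg (p.dual hp (c - gφ v) - 8 * L * p (y' - v))
    have e : 1 / (16 * L) * p.dual hp (c - gφ v) ^ 2 + 4 * L * p (y' - v) ^ 2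
        - p.dual hp (c - gφ v) * p (y' - v)
        = (p.dual hp (c - gφ v) - 8 * L * p (y' - v)) ^ 2 / (16 * L) := by
      field_simp; ring
    nlinarith [div_nonneg this (by positivity : (0 : ℝ) ≤ 16 * L)]
  have hflip : ⟪gφ v, v - y'⟫ = -⟪gφ v, y' - v⟫ := by rw [← inner_neg_right, neg_sub]
  linarith

theorem inner_le_of_mirror_step_of_prox_step {φ : E → ℝ} {gφ : E → E} {w : E → ℝ} {gw : E → E}
    {τ α : ℝ} {c v y' z z' u : E} (hL : 0 < L) (hτ : 0 < τ) (hα : α = 1 / (9 * τ * L))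
    (hdesc : φ y' ≤ φ v + ⟪gφ v, y' - v⟫ + L / 2 * p (y' - v) ^ 2)
    (hw : ∀ x, HasGradientAt w (gw x) x)
    (hw_sc : ∀ x y, w x + ⟪gw x, y - x⟫ + 1 / 2 * p (y - x) ^ 2 ≤ w y)
    (hz' : ∀ y, 1 / α * bregmanDiv w gw z z' + ⟪c, z'⟫ ≤ 1 / α * bregmanDiv w gw z y + ⟪c, y⟫)
    (hy' : ∀ y, 9 * L / 2 * p (y' - v) ^ 2 + ⟪c, y'⟫ ≤ 9 * L / 2 * p (y - v) ^ 2 + ⟪c, y⟫) :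
    α * ⟪c, z - u⟫ ≤ α / τ * (φ v - φ y' + 1 / (16 * L) * p.dual hp (c - gφ v) ^ 2)
      + bregmanDiv w gw z u - bregmanDiv w gw z' u := by
  have hα₀ : 0 < α := hα ▸ by positivity
  have hthree : α * ⟪c, z' - u⟫
      = bregmanDiv w gw z u - bregmanDiv w gw z' u - bregmanDiv w gw z z' := by
    rw [← real_inner_smul_left, ← bregmanDiv_three_point,
      gradient_eq_sub_smul_of_mirror_step hw hα₀ hz', sub_sub_cancel]
  have hsc : 1 / 2 * p (z' - z) ^ 2 ≤ bregmanDiv w gw z z' := by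
    have := hw_sc z z'
    rw [bregmanDiv]
    linarith
  have hprox := inner_sub_sub_sq_le_of_prox_step (z := z) (z' := z') hL hτ hα hy'
  have hdesc' := mul_le_mul_of_nonneg_left
    (inner_sub_sub_sq_le_of_descent (hp := hp) (c := c) hL hdesc) (div_nonneg hα₀.le hτ.le)
  have hsplit : ⟪c, z - u⟫ = ⟪c, z - z'⟫ + ⟪c, z' - u⟫ := by
    rw [← inner_add_right, sub_add_sub_cancel]
  rw [hsplit, mul_add, hthree]
  linarith

theorem sum_mul_dual_sq_sub_mean_le {m : ℕ} {φi : Fin m → E → ℝ} {gφi : Fin m → E → E}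
    {Li pr : Fin m → ℝ} {Lbar : ℝ} (hconv : ∀ i, ConvexOn ℝ univ (φi i))
    (hdiff : ∀ i x, HasGradientAt (φi i) (gφi i x) x)
    (hL : ∀ i, 0 < Li i) (hsmooth : ∀ i x y, p.dual hp (gφi i x - gφi i y) ≤ Li i * p (x - y))
    (hLbar : 0 < Lbar) (hpr : ∀ i, pr i = Li i / (m * Lbar)) (hpr₁ : ∑ i, pr i = 1)
    {b x y : E} {c : Fin m → E} (hc : ∀ i, c i = b + (1 / (m * pr i)) • (gφi i x - gφi i y)) :
    ∑ i, pr i * p.dual hp (c i - ∑ j, pr j • c j) ^ 2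
      ≤ 8 * Lbar * (1 / m * ∑ i, bregmanDiv (φi i) (gφi i) x y) := by
  have hpr₀ : ∀ i, 0 ≤ pr i := fun i => hpr i ▸ div_nonneg (hL i).le (by positivity)
  calc ∑ i, pr i * p.dual hp (c i - ∑ j, pr j • c j) ^ 2
      ≤ 4 * ∑ i, pr i * p.dual hp (c i - b) ^ 2 :=
        (p.dual hp).sum_mul_sq_sub_sum_smul_le _ (fun i _ => hpr₀ i) hpr₁ c b
    _ ≤ 4 * (2 * Lbar * (1 / m * ∑ i, bregmanDiv (φi i) (gφi i) x y)) := by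
        simp_rw [hc, add_sub_cancel_left]
        gcongr
        refine (p.dual hp).sum_mul_sq_importance_le hL hLbar hpr fun i => ?_
        rw [map_sub_rev]
        exact dual_sq_le_two_mul_bregmanDiv (hconv i) (hdiff i) (hsmooth i) (hL i) x y
    _ = 8 * Lbar * (1 / m * ∑ i, bregmanDiv (φi i) (gφi i) x y) := by ring


end DualNorm

theorem pdasmd_coupling_step1_general
    (dl m : ℕ) (hm : 0 < m)
    -- the norm ‖·‖_H and its dual norm ‖·‖_{H,*}
    (H : EuclideanSpace ℝ (Fin dl) → ℝ)
    (hH_def : ∀ x, H x = 0 ↔ x = 0)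
    (hH_smul : ∀ (c : ℝ) (x : EuclideanSpace ℝ (Fin dl)), H (c • x) = |c| * H x)
    (hH_tri : ∀ x y, H (x + y) ≤ H x + H y)
    (Hd : EuclideanSpace ℝ (Fin dl) → ℝ)
    (hHd : ∀ u, Hd u = sSup ((fun v => ⟪u, v⟫) '' {v | H v ≤ 1}))
    -- the finite-sum function φ = (1/m) Σ φᵢ, with gradients
    (φi : Fin m → EuclideanSpace ℝ (Fin dl) → ℝ)
    (gφi : Fin m → EuclideanSpace ℝ (Fin dl) → EuclideanSpace ℝ (Fin dl))
    (hφi_conv : ∀ i, ConvexOn ℝ Set.univ (φi i))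
    (hφi_diff : ∀ i x, HasGradientAt (φi i) (gφi i x) x)
    (Li : Fin m → ℝ) (hLi : ∀ i, 0 < Li i)
    (hφi_smooth : ∀ i x y, Hd (gφi i x - gφi i y) ≤ Li i * H (x - y))
    (Lbar : ℝ) (hLbar : Lbar = (∑ i, Li i) / m)
    (pr : Fin m → ℝ) (hpr : ∀ i, pr i = Li i / (m * Lbar))
    (φ : EuclideanSpace ℝ (Fin dl) → ℝ)
    (hφ : ∀ x, φ x = (1 / m : ℝ) * ∑ i, φi i x)
    (gφ : EuclideanSpace ℝ (Fin dl) → EuclideanSpace ℝ (Fin dl))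
    (hgφ : ∀ x, gφ x = (m : ℝ)⁻¹ • ∑ i, gφi i x)
    -- the mirror map: differentiable, 1-strongly convex and γ-smooth w.r.t. ‖·‖_H
    (w : EuclideanSpace ℝ (Fin dl) → ℝ)
    (gw : EuclideanSpace ℝ (Fin dl) → EuclideanSpace ℝ (Fin dl))
    (hw_diff : ∀ x, HasGradientAt w (gw x) x)
    (hw_sc : ∀ x y, w x + ⟪gw x, y - x⟫ + (1 / 2) * H (y - x) ^ 2 ≤ w y)
    (Vb : EuclideanSpace ℝ (Fin dl) → EuclideanSpace ℝ (Fin dl) → ℝ)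
    (hVb : ∀ x y, Vb x y = w y - w x - ⟪gw x, y - x⟫)
    -- one inner step of PDASMD
    (s : ℕ) (τ1 τ2 α : ℝ)
    (hτ1 : τ1 = 2 / ((s : ℝ) + 4)) (hτ2 : τ2 = 1 / 2) (hα : α = 1 / (9 * τ1 * Lbar))
    (zk vts vk1 : EuclideanSpace ℝ (Fin dl))
    (gt : Fin m → EuclideanSpace ℝ (Fin dl))
    (hgt : ∀ i, gt i = gφ vts + (1 / (m * pr i)) • (gφi i vk1 - gφi i vts))
    (z1 y1 : Fin m → EuclideanSpace ℝ (Fin dl))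
    (hz1 : ∀ i z, (1 / α) * Vb zk (z1 i) + ⟪gt i, z1 i⟫
      ≤ (1 / α) * Vb zk z + ⟪gt i, z⟫)
    (hy1 : ∀ i y, (9 * Lbar / 2) * H (y1 i - vk1) ^ 2 + ⟪gt i, y1 i⟫
      ≤ (9 * Lbar / 2) * H (y - vk1) ^ 2 + ⟪gt i, y⟫) :
    ∀ u : EuclideanSpace ℝ (Fin dl),
      α * ⟪gφ vk1, zk - u⟫
        ≤ (α / τ1) * (φ vk1 - (∑ i, pr i * φ (y1 i)) + τ2 * φ vts - τ2 * φ vk1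
              - τ2 * ⟪gφ vk1, vts - vk1⟫)
          + Vb zk u - ∑ i, pr i * Vb (z1 i) u := by
  intro u
  let p : Seminorm ℝ (EuclideanSpace ℝ (Fin dl)) := Seminorm.of H hH_tri hH_smul
  have hp : ∀ x, p x = 0 → x = 0 := fun x => (hH_def x).1
  obtain rfl : Hd = p.dual hp := funext hHd
  obtain rfl : Vb = bregmanDiv w gw := funext fun x => funext (hVb x)
  obtain ⟨hLbar₀, hpr₀, hpr₁⟩ := importance_weights_pos_sum_eq_one hm hLi hLbar hpr
  have hτ1₀ : 0 < τ1 := hτ1 ▸ by positivity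
  have hdesc := le_add_inner_add_sq_of_dual_le (hasGradientAt_of_eq_average hφi_diff hφ hgφ)
    (fun x y => hLbar ▸ Seminorm.sub_le_of_eq_average hφi_smooth hgφ x y) vk1
  have hstep := fun i => inner_le_of_mirror_step_of_prox_step (hp := hp) (u := u) hLbar₀ hτ1₀ hα
    (hdesc (y1 i)) hw_diff hw_sc (hz1 i) (hy1 i)
  have hmean : ∑ i, pr i • gt i = gφ vk1 := by
    simp_rw [hgt]
    rw [sum_smul_importance_estimator (fun i => (hpr₀ i).ne') hpr₁, hgφ, hgφ,
      Finset.sum_sub_distrib, smul_sub, add_sub_cancel]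
  have hvar := sum_mul_dual_sq_sub_mean_le hφi_conv hφi_diff hLi hφi_smooth hLbar₀ hpr hpr₁ hgt
  rw [hmean, ← bregmanDiv_of_eq_average hφ hgφ] at hvar
  calc _ ≤ _ := inner_le_of_unbiased_of_variance_le (fun i => (hpr₀ i).le) hpr₁
        (div_nonneg (hα ▸ by positivity) hτ1₀.le) hLbar₀ hstep hmean hvar
    _ = _ := by rw [hτ2, bregmanDiv]; ring

/-- Coupling step 1.  One inner step of PDASMD: with `v_{k+1} = τ₁ z_k + τ₂ ṽ^s
+ (1 − τ₁ − τ₂) y_k`, the variance-reduced gradient `∇̃_{k+1}(i)` and the mirror/proximal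
updates `z_{k+1}(i)`, `y_{k+1}(i)`, one has for every `u`:
`α ⟨∇φ(v_{k+1}), z_k − u⟩ ≤ (α/τ₁)(φ(v_{k+1}) − E[φ(y_{k+1})] + τ₂ φ(ṽ^s) − τ₂ φ(v_{k+1})
− τ₂ ⟨∇φ(v_{k+1}), ṽ^s − v_{k+1}⟩) + V_{z_k}(u) − E[V_{z_{k+1}}(u)]`,
where `E[g] = Σ_i p_i g(i)`. -/
theorem pdasmd_coupling_step1
    (dl m : ℕ) (hm : 0 < m)
    -- the norm ‖·‖_H and its dual norm ‖·‖_{H,*}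
    (H : EuclideanSpace ℝ (Fin dl) → ℝ)
    (hH_def : ∀ x, H x = 0 ↔ x = 0)
    (hH_smul : ∀ (c : ℝ) (x : EuclideanSpace ℝ (Fin dl)), H (c • x) = |c| * H x)
    (hH_tri : ∀ x y, H (x + y) ≤ H x + H y)
    (Hd : EuclideanSpace ℝ (Fin dl) → ℝ)
    (hHd : ∀ u, Hd u = sSup ((fun v => ⟪u, v⟫) '' {v | H v ≤ 1}))
    -- the finite-sum function φ = (1/m) Σ φᵢ, with gradients
    (φi : Fin m → EuclideanSpace ℝ (Fin dl) → ℝ)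
    (gφi : Fin m → EuclideanSpace ℝ (Fin dl) → EuclideanSpace ℝ (Fin dl))
    (hφi_conv : ∀ i, ConvexOn ℝ Set.univ (φi i))
    (hφi_diff : ∀ i x, HasGradientAt (φi i) (gφi i x) x)
    (Li : Fin m → ℝ) (hLi : ∀ i, 0 < Li i)
    (hφi_smooth : ∀ i x y, Hd (gφi i x - gφi i y) ≤ Li i * H (x - y))
    (Lbar : ℝ) (hLbar : Lbar = (∑ i, Li i) / m)
    (pr : Fin m → ℝ) (hpr : ∀ i, pr i = Li i / (m * Lbar))
    (φ : EuclideanSpace ℝ (Fin dl) → ℝ)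
    (hφ : ∀ x, φ x = (1 / m : ℝ) * ∑ i, φi i x)
    (gφ : EuclideanSpace ℝ (Fin dl) → EuclideanSpace ℝ (Fin dl))
    (hgφ : ∀ x, gφ x = (m : ℝ)⁻¹ • ∑ i, gφi i x)
    -- the mirror map: differentiable, 1-strongly convex and γ-smooth w.r.t. ‖·‖_H
    (γ : ℝ) (w : EuclideanSpace ℝ (Fin dl) → ℝ)
    (gw : EuclideanSpace ℝ (Fin dl) → EuclideanSpace ℝ (Fin dl))
    (hw_diff : ∀ x, HasGradientAt w (gw x) x)
    (hw_sc : ∀ x y, w x + ⟪gw x, y - x⟫ + (1 / 2) * H (y - x) ^ 2 ≤ w y)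
    (hw_smooth : ∀ x y, Hd (gw x - gw y) ≤ γ * H (x - y))
    (Vb : EuclideanSpace ℝ (Fin dl) → EuclideanSpace ℝ (Fin dl) → ℝ)
    (hVb : ∀ x y, Vb x y = w y - w x - ⟪gw x, y - x⟫)
    -- one inner step of PDASMD
    (s : ℕ) (τ1 τ2 α : ℝ)
    (hτ1 : τ1 = 2 / ((s : ℝ) + 4)) (hτ2 : τ2 = 1 / 2) (hα : α = 1 / (9 * τ1 * Lbar))
    (zk yk vts vk1 : EuclideanSpace ℝ (Fin dl))
    (hvk1 : vk1 = τ1 • zk + τ2 • vts + (1 - τ1 - τ2) • yk)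
    (gt : Fin m → EuclideanSpace ℝ (Fin dl))
    (hgt : ∀ i, gt i = gφ vts + (1 / (m * pr i)) • (gφi i vk1 - gφi i vts))
    (z1 y1 : Fin m → EuclideanSpace ℝ (Fin dl))
    (hz1 : ∀ i z, (1 / α) * Vb zk (z1 i) + ⟪gt i, z1 i⟫
      ≤ (1 / α) * Vb zk z + ⟪gt i, z⟫)
    (hy1 : ∀ i y, (9 * Lbar / 2) * H (y1 i - vk1) ^ 2 + ⟪gt i, y1 i⟫
      ≤ (9 * Lbar / 2) * H (y - vk1) ^ 2 + ⟪gt i, y⟫) :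
    ∀ u : EuclideanSpace ℝ (Fin dl),
      α * ⟪gφ vk1, zk - u⟫
        ≤ (α / τ1) * (φ vk1 - (∑ i, pr i * φ (y1 i)) + τ2 * φ vts - τ2 * φ vk1
              - τ2 * ⟪gφ vk1, vts - vk1⟫)
          + Vb zk u - ∑ i, pr i * Vb (z1 i) u :=
  pdasmd_coupling_step1_general dl m hm H hH_def hH_smul hH_tri Hd hHd φi gφi hφi_conv hφi_diff Li
    hLi hφi_smooth Lbar hLbar pr hpr φ hφ gφ hgφ w gw hw_diff hw_sc Vb hVb s τ1 τ2 α hτ1 hτ2 hα zk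
    vts vk1 gt hgt z1 y1 hz1 hy1
end

section
/- Each semi-dual component φ_i of entropy-regularized optimal transport is (n p'_i / η)-smooth with respect to the Euclidean norm: for every i ∈ {1,…,n} and all λ, λ' ∈ ℝⁿ, ‖∇φ_i(λ) − ∇φ_i(λ')‖₂ ≤ (n p'_i / η) ‖λ − λ'‖₂. -/
/-! The gradient is `∇φ_i(λ) = n p'_i (softmax ((λ - c) / η) - q')` with `c_j = C_ij + η`, because
log-sum-exp has gradient softmax. Softmax is 1-Lipschitz for the Euclidean norm: its Jacobian
`diag s - s sᵀ` at the probability vector `s` sends `v` to `(s_k (v_k - ⟨s, v⟩))_k`, whose squared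
norm is at most `∑ s_k (v_k - ⟨s, v⟩)² ≤ ∑ s_k v_k² ≤ ‖v‖²`, and the mean value inequality applies. -/

open scoped BigOperators

/-- The `i`-th semi-dual component of entropy-regularized optimal transport:
`φ_i(λ) = n p'_i ( −⟨q', λ⟩ − η log p'_i + η log( Σ_j exp((λ_j − C_{ij} − η)/η) ) + η )`. -/
noncomputable def otSemiDualComponent (n : ℕ) (η : ℝ) (C : Fin n → Fin n → ℝ)
    (p' q' : Fin n → ℝ) (i : Fin n) (lam : EuclideanSpace ℝ (Fin n)) : ℝ :=
  n * p' i * (-(∑ j, q' j * lam j) - η * Real.log (p' i)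
    + η * Real.log (∑ j, Real.exp ((lam j - C i j - η) / η)) + η)

open Real
open scoped Matrix

section Softmax

variable {ι : Type*} [Fintype ι]

theorem sum_sq_mul_sub_dotProduct_le {s : ι → ℝ} (hs : ∀ k, 0 ≤ s k) (hs1 : ∑ k, s k = 1)
    (v : ι → ℝ) : ∑ k, (s k * (v k - s ⬝ᵥ v)) ^ 2 ≤ ∑ k, v k ^ 2 := by
  set m := s ⬝ᵥ v
  have hs_le_one (k : ι) : s k ≤ 1 :=
    hs1 ▸ Finset.single_le_sum (fun j _ => hs j) (Finset.mem_univ k)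
  have variance_eq : ∑ k, s k * (v k - m) ^ 2 = ∑ k, s k * v k ^ 2 - m ^ 2 := by
    have h (k : ι) : s k * (v k - m) ^ 2 = s k * v k ^ 2 - 2 * m * (s k * v k) + m ^ 2 * s k := by
      ring
    simp only [h, Finset.sum_add_distrib, Finset.sum_sub_distrib, ← Finset.mul_sum, hs1]
    simp only [m, dotProduct]
    ring
  calc ∑ k, (s k * (v k - m)) ^ 2
      ≤ ∑ k, s k * (v k - m) ^ 2 := Finset.sum_le_sum fun k _ => by
        nlinarith [mul_nonneg (mul_nonneg (hs k) (sub_nonneg.2 (hs_le_one k))) (sq_nonneg (v k - m))]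
    _ ≤ ∑ k, s k * v k ^ 2 := by rw [variance_eq]; linarith [sq_nonneg m]
    _ ≤ ∑ k, v k ^ 2 := Finset.sum_le_sum fun k _ =>
        mul_le_of_le_one_left (sq_nonneg _) (hs_le_one k)

noncomputable def logSumExp (x : EuclideanSpace ℝ ι) : ℝ :=
  log (∑ j, exp (x j))

noncomputable def softmax (x : EuclideanSpace ℝ ι) : EuclideanSpace ℝ ι :=
  WithLp.toLp 2 fun k => exp (x k) / ∑ j, exp (x j)

theorem hasFDerivAt_sum_exp (x : EuclideanSpace ℝ ι) :
    HasFDerivAt (fun y : EuclideanSpace ℝ ι => ∑ j, exp (y j))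
      (∑ j, exp (x j) • EuclideanSpace.proj (𝕜 := ℝ) j) x :=
  .fun_sum fun j _ => (PiLp.hasFDerivAt_apply 2 x j).exp

variable [Nonempty ι]

theorem sum_exp_pos (x : ι → ℝ) : 0 < ∑ j, exp (x j) :=
  Finset.sum_pos (fun _ _ => exp_pos _) Finset.univ_nonempty

theorem softmax_nonneg (x : EuclideanSpace ℝ ι) (k : ι) : 0 ≤ softmax x k :=
  div_nonneg (exp_pos _).le (sum_exp_pos _).le

theorem sum_softmax (x : EuclideanSpace ℝ ι) : ∑ k, softmax x k = 1 := by
  simp only [softmax, PiLp.toLp_apply, ← Finset.sum_div]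
  exact div_self (sum_exp_pos _).ne'

theorem hasGradientAt_logSumExp (x : EuclideanSpace ℝ ι) :
    HasGradientAt logSumExp (softmax x) x := by
  rw [hasGradientAt_iff_hasFDerivAt]
  refine ((hasFDerivAt_sum_exp x).log (sum_exp_pos _).ne').congr_fderiv ?_
  ext v
  simp only [smul_apply, sum_apply, PiLp.proj_apply, smul_eq_mul, Finset.mul_sum, softmax,
    InnerProductSpace.toDual_apply_apply, PiLp.inner_apply, RCLike.inner_apply, map_div₀,
    ringHom_apply, map_sum]
  exact Finset.sum_congr rfl fun j _ => by ring

theorem softmax_apply (x : EuclideanSpace ℝ ι) (k : ι) :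
    softmax x k = exp (x k - logSumExp x) := by
  rw [exp_sub, logSumExp, exp_log (sum_exp_pos _)]
  rfl

theorem hasFDerivAt_softmax_apply (x : EuclideanSpace ℝ ι) (k : ι) :
    HasFDerivAt (fun y => softmax y k)
      (softmax x k • (EuclideanSpace.proj k - InnerProductSpace.toDual ℝ _ (softmax x))) x := by
  simp_rw [softmax_apply]
  exact ((PiLp.hasFDerivAt_apply 2 x k).sub (hasGradientAt_logSumExp x).hasFDerivAt).exp

variable [DecidableEq ι]

noncomputable def softmaxJacobian (x : EuclideanSpace ℝ ι) : Matrix ι ι ℝ :=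
  Matrix.diagonal (softmax x).ofLp - Matrix.vecMulVec (softmax x).ofLp (softmax x).ofLp

theorem hasFDerivAt_softmax (x : EuclideanSpace ℝ ι) :
    HasFDerivAt softmax (Matrix.toEuclideanCLM (𝕜 := ℝ) (softmaxJacobian x)) x := by
  rw [← hasFDerivWithinAt_univ, hasFDerivWithinAt_piLp]
  intro k
  refine ((hasFDerivAt_softmax_apply x k).congr_fderiv ?_).hasFDerivWithinAt
  ext v
  simp only [smul_apply, sub_apply, PiLp.proj_apply, InnerProductSpace.toDual_apply_apply,
    PiLp.inner_apply, RCLike.inner_apply, ringHom_apply, smul_eq_mul, softmaxJacobian, map_sub,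
    ContinuousLinearMap.comp_sub, ContinuousLinearMap.comp_apply, Matrix.ofLp_toEuclideanCLM,
    Matrix.mulVec, dotProduct, Matrix.diagonal_apply, ite_mul, zero_mul, Finset.sum_ite_eq,
    Finset.mem_univ, if_true, Matrix.vecMulVec_apply, mul_sub, Finset.mul_sum]
  exact congrArg _ (Finset.sum_congr rfl fun j _ => by ring)

theorem norm_toEuclideanCLM_softmaxJacobian_le (x : EuclideanSpace ℝ ι) :
    ‖Matrix.toEuclideanCLM (𝕜 := ℝ) (softmaxJacobian x)‖ ≤ 1 := by
  refine ContinuousLinearMap.opNorm_le_bound _ zero_le_one fun v => ?_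
  have hJv (k : ι) : (softmaxJacobian x *ᵥ v.ofLp) k
      = softmax x k * (v k - (softmax x).ofLp ⬝ᵥ v.ofLp) := by
    simp only [softmaxJacobian, Matrix.sub_mulVec, Matrix.vecMulVec_mulVec, op_smul_eq_smul,
      Pi.sub_apply, Matrix.mulVec_diagonal, Pi.smul_apply, smul_eq_mul]
    ring
  rw [one_mul, EuclideanSpace.norm_eq, EuclideanSpace.norm_eq]
  refine sqrt_le_sqrt ?_
  simp only [Matrix.ofLp_toEuclideanCLM, hJv, norm_eq_abs, sq_abs]
  exact sum_sq_mul_sub_dotProduct_le (softmax_nonneg x) (sum_softmax x) v.ofLp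

theorem lipschitzWith_softmax : LipschitzWith 1 (softmax : EuclideanSpace ℝ ι → _) :=
  lipschitzWith_of_nnnorm_fderiv_le (fun x => (hasFDerivAt_softmax x).differentiableAt)
    fun x => by
      rw [(hasFDerivAt_softmax x).fderiv, ← NNReal.coe_le_coe]
      exact norm_toEuclideanCLM_softmaxJacobian_le x

end Softmax

theorem hasGradientAt_mul_logSumExp_smul_sub {ι : Type*} [Fintype ι] [Nonempty ι] {η : ℝ}
    (hη : η ≠ 0) (c x : EuclideanSpace ℝ ι) :
    HasGradientAt (fun y => η * logSumExp (η⁻¹ • (y - c))) (softmax (η⁻¹ • (x - c))) x := by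
  rw [hasGradientAt_iff_hasFDerivAt]
  have hscale := ((hasFDerivAt_id (𝕜 := ℝ) x).sub_const c).const_smul η⁻¹
  refine (((hasGradientAt_logSumExp _).hasFDerivAt.comp x hscale).const_mul η).congr_fderiv ?_
  ext v
  simp [hη]

theorem otSemiDualComponent_eq {n : ℕ} (η : ℝ) (C : Fin n → Fin n → ℝ) (p' q' : Fin n → ℝ)
    (i : Fin n) :
    otSemiDualComponent n η C p' q' i = fun lam => n * p' i * (-(inner ℝ (WithLp.toLp 2 q') lam)
      - η * log (p' i) + η * logSumExp (η⁻¹ • (lam - WithLp.toLp 2 (fun j => C i j + η))) + η) := by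
  ext lam
  simp [otSemiDualComponent, logSumExp, PiLp.inner_apply, sub_sub, div_eq_inv_mul, mul_comm]

theorem gradient_otSemiDualComponent {n : ℕ} [Nonempty (Fin n)] {η : ℝ} (hη : η ≠ 0)
    (C : Fin n → Fin n → ℝ) (p' q' : Fin n → ℝ) (i : Fin n) (lam : EuclideanSpace ℝ (Fin n)) :
    gradient (otSemiDualComponent n η C p' q' i) lam
      = (n * p' i) • (softmax (η⁻¹ • (lam - WithLp.toLp 2 (fun j => C i j + η)))
          - WithLp.toLp 2 q') := by
  refine HasGradientAt.gradient ?_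
  rw [otSemiDualComponent_eq, hasGradientAt_iff_hasFDerivAt]
  have hlin := (InnerProductSpace.toDual ℝ _ (WithLp.toLp 2 q')).hasFDerivAt (x := lam)
  have hlse := (hasGradientAt_mul_logSumExp_smul_sub hη (WithLp.toLp 2 (fun j => C i j + η)) lam)
  rw [hasGradientAt_iff_hasFDerivAt] at hlse
  refine ((((hlin.neg.sub_const _).add hlse).add_const η).const_mul _).congr_fderiv ?_
  simp [sub_eq_neg_add]

theorem otSemiDualComponent_smooth_l2_general (n : ℕ) (hn : 1 ≤ n) (η : ℝ) (hη : 0 < η)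
    (C : Fin n → Fin n → ℝ) (p' q' : Fin n → ℝ)
    (hp_pos : ∀ i, 0 < p' i) :
    ∀ (i : Fin n) (lam lam' : EuclideanSpace ℝ (Fin n)),
      ‖gradient (otSemiDualComponent n η C p' q' i) lam
          - gradient (otSemiDualComponent n η C p' q' i) lam'‖
        ≤ (n * p' i / η) * ‖lam - lam'‖ := by
  intro i lam lam'
  have : Nonempty (Fin n) := Fin.pos_iff_nonempty.mp hn
  have ha : 0 ≤ (n : ℝ) * p' i := by have := hp_pos i; positivity
  set c : EuclideanSpace ℝ (Fin n) := WithLp.toLp 2 fun j => C i j + η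
  rw [gradient_otSemiDualComponent hη.ne', gradient_otSemiDualComponent hη.ne', ← smul_sub,
    sub_sub_sub_cancel_right, norm_smul, norm_of_nonneg ha]
  calc n * p' i * ‖softmax (η⁻¹ • (lam - c)) - softmax (η⁻¹ • (lam' - c))‖
      ≤ n * p' i * ‖η⁻¹ • (lam - c) - η⁻¹ • (lam' - c)‖ := by
        gcongr
        simpa using lipschitzWith_softmax.norm_sub_le (η⁻¹ • (lam - c)) (η⁻¹ • (lam' - c))
    _ = n * p' i / η * ‖lam - lam'‖ := by
        rw [← smul_sub, sub_sub_sub_cancel_right, norm_smul, norm_inv, norm_of_nonneg hη.le]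
        ring

/-- each semi-dual component `φ_i` is `(n p'_i / η)`-smooth w.r.t. the
Euclidean norm: `‖∇φ_i(λ) − ∇φ_i(λ')‖₂ ≤ (n p'_i / η) ‖λ − λ'‖₂`. -/
theorem otSemiDualComponent_smooth_l2 (n : ℕ) (hn : 1 ≤ n) (η : ℝ) (hη : 0 < η)
    (C : Fin n → Fin n → ℝ) (p' q' : Fin n → ℝ)
    (hp_pos : ∀ i, 0 < p' i) (hq_nonneg : ∀ j, 0 ≤ q' j)
    (hp_sum : ∑ i, p' i = 1) (hq_sum : ∑ j, q' j = 1) :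
    ∀ (i : Fin n) (lam lam' : EuclideanSpace ℝ (Fin n)),
      ‖gradient (otSemiDualComponent n η C p' q' i) lam
          - gradient (otSemiDualComponent n η C p' q' i) lam'‖
        ≤ (n * p' i / η) * ‖lam - lam'‖ :=
  otSemiDualComponent_smooth_l2_general n hn η hη C p' q' hp_pos
end

section
/- For all vectors a, b ∈ ℝ^d with a_k > 0 for every k: ‖ a/‖a‖₁ − (a ∘ exp(b))/‖a ∘ exp(b)‖₁ ‖₁ ≤ 5 ‖b‖_∞, where ‖·‖₁ is the ℓ₁ norm, ‖·‖_∞ the ℓ∞ norm, and a ∘ exp(b) denotes the coordinatewise product (a_k e^{b_k})_{k=1,…,d}. -/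
/-!
Write `S = ∑ |a|` and `T = ∑ |a ∘ exp b|`. Splitting
`a/S - (a ∘ exp b)/T = (a - a ∘ exp b)/S + (a ∘ exp b)(1/S - 1/T)` and using
`|T - S| ≤ ∑ |a - a ∘ exp b|` bounds the distance of the two normalizations by
`2 ∑ |a - a ∘ exp b| / S`, and `|e^t - 1| ≤ 2|t|` for `|t| ≤ 1` turns this into `4 ‖b‖`.
When `‖b‖ > 1` the trivial bound `2` on the distance of two probability vectors suffices.
-/

open Finset

variable {ι : Type*} [Fintype ι]

theorem abs_sum_abs_sub_sum_abs_le (x y : ι → ℝ) :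
    |(∑ i, |y i|) - (∑ i, |x i|)| ≤ ∑ i, |x i - y i| := by
  rw [← sum_sub_distrib]
  refine (abs_sum_le_sum_abs _ _).trans (sum_le_sum fun i _ => ?_)
  rw [abs_sub_comm (x i)]
  exact abs_abs_sub_abs_le_abs_sub _ _

theorem sum_abs_div_sum_abs_sub_div_sum_abs_le_two (x y : ι → ℝ) :
    ∑ i, |x i / (∑ j, |x j|) - y i / (∑ j, |y j|)| ≤ 2 := by
  set S := ∑ j, |x j|
  set T := ∑ j, |y j|
  have hS : 0 ≤ S := sum_nonneg fun j _ => abs_nonneg _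
  have hT : 0 ≤ T := sum_nonneg fun j _ => abs_nonneg _
  calc ∑ i, |x i / S - y i / T| ≤ ∑ i, (|x i| / S + |y i| / T) :=
        sum_le_sum fun i _ => by
          simpa only [abs_div, abs_of_nonneg hS, abs_of_nonneg hT] using abs_sub (x i / S) (y i / T)
    _ = S / S + T / T := by rw [sum_add_distrib, ← sum_div, ← sum_div]
    _ ≤ 2 := by linarith [div_self_le_one S, div_self_le_one T]

theorem sum_abs_div_sum_abs_sub_div_sum_abs_le (x y : ι → ℝ) (hx : 0 < ∑ j, |x j|) :
    ∑ i, |x i / (∑ j, |x j|) - y i / (∑ j, |y j|)|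
      ≤ 2 * (∑ i, |x i - y i|) / ∑ j, |x j| := by
  set S := ∑ j, |x j|
  set T := ∑ j, |y j|
  set D := ∑ i, |x i - y i|
  have hT : 0 ≤ T := sum_nonneg fun j _ => abs_nonneg _
  have hmass : T * |1 / S - 1 / T| ≤ D / S := by
    rcases hT.eq_or_lt with hT0 | hTpos
    · rw [← hT0, zero_mul]
      exact div_nonneg (sum_nonneg fun i _ => abs_nonneg _) hx.le
    · have : T * (1 / S - 1 / T) = (T - S) / S := by
        rw [mul_sub, mul_one_div, mul_one_div_cancel hTpos.ne', sub_div, div_self hx.ne']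
      calc T * |1 / S - 1 / T| = |T * (1 / S - 1 / T)| := by rw [abs_mul, abs_of_pos hTpos]
        _ = |T - S| / S := by rw [this, abs_div, abs_of_pos hx]
        _ ≤ D / S := by gcongr; exact abs_sum_abs_sub_sum_abs_le x y
  calc ∑ i, |x i / S - y i / T| ≤ ∑ i, (|x i - y i| / S + |y i| * |1 / S - 1 / T|) :=
        sum_le_sum fun i _ => by
          have hdecomp : x i / S - y i / T = (x i - y i) / S + y i * (1 / S - 1 / T) := by ring
          rw [hdecomp]
          refine (abs_add_le _ _).trans_eq ?_
          rw [abs_div, abs_of_pos hx, abs_mul]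
    _ = D / S + T * |1 / S - 1 / T| := by rw [sum_add_distrib, ← sum_div, ← sum_mul]
    _ ≤ D / S + D / S := by gcongr
    _ = 2 * D / S := by ring

theorem sum_abs_sub_mul_exp_le (a b : ι → ℝ) (hb : ‖b‖ ≤ 1) :
    ∑ k, |a k - a k * Real.exp (b k)| ≤ 2 * ‖b‖ * ∑ k, |a k| := by
  rw [mul_sum]
  refine sum_le_sum fun k _ => ?_
  have hbk : |b k| ≤ ‖b‖ := by simpa only [Real.norm_eq_abs] using norm_le_pi_norm b k
  calc |a k - a k * Real.exp (b k)| = |a k| * |Real.exp (b k) - 1| := by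
        rw [← abs_mul, mul_sub_one, abs_sub_comm]
    _ ≤ |a k| * (2 * ‖b‖) := by
        gcongr
        exact (Real.abs_exp_sub_one_le (hbk.trans hb)).trans (by linarith)
    _ = 2 * ‖b‖ * |a k| := by ring

/-- For all vectors `a b : ℝ^d` with `a k > 0` for every `k`,
`‖ a/‖a‖₁ − (a ∘ exp b)/‖a ∘ exp b‖₁ ‖₁ ≤ 5 ‖b‖_∞`.  Here the ℓ₁ norm is written out as a
sum of absolute values and `‖b‖` is the sup (ℓ∞) norm on `Fin d → ℝ`. -/
theorem l1_ratio_exp_perturbation_bound (d : ℕ) (hd : 1 ≤ d) (a b : Fin d → ℝ)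
    (ha : ∀ k, 0 < a k) :
    ∑ k, |a k / (∑ j, |a j|) - a k * Real.exp (b k) / (∑ j, |a j * Real.exp (b j)|)|
      ≤ 5 * ‖b‖ := by
  have hS : 0 < ∑ j, |a j| :=
    sum_pos (fun j _ => abs_pos.mpr (ha j).ne') (univ_nonempty_iff.mpr ⟨⟨0, hd⟩⟩)
  rcases le_or_gt ‖b‖ 1 with hb | hb
  · calc _ ≤ 2 * (∑ k, |a k - a k * Real.exp (b k)|) / ∑ j, |a j| :=
          sum_abs_div_sum_abs_sub_div_sum_abs_le a (fun k => a k * Real.exp (b k)) hS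
      _ ≤ 2 * (2 * ‖b‖ * ∑ j, |a j|) / ∑ j, |a j| := by
          gcongr
          exact sum_abs_sub_mul_exp_le a b hb
      _ = 4 * ‖b‖ := by field_simp; ring
      _ ≤ 5 * ‖b‖ := by linarith [norm_nonneg b]
  · linarith [sum_abs_div_sum_abs_sub_div_sum_abs_le_two a (fun k => a k * Real.exp (b k))]
end

section
/- For all vectors a, b ∈ ℝ^d with a_k > 0 for every k and ‖b‖_∞ ≤ 1/2: ‖ a/‖a‖₁ − (a ∘ exp(b))/‖a ∘ exp(b)‖₁ ‖₁ ≤ 4 e^{1/2} (e^{1/2} − 1) ‖b‖_∞, where ‖·‖₁ is the ℓ₁ norm, ‖·‖_∞ the ℓ∞ norm, and a ∘ exp(b) denotes the coordinatewise product (a_k e^{b_k})_{k=1,…,d}. -/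
open scoped BigOperators

/-- For all vectors `a b : ℝ^d` with `a k > 0` for every `k` and `‖b‖_∞ ≤ 1/2`,
`‖ a/‖a‖₁ − (a ∘ exp b)/‖a ∘ exp b‖₁ ‖₁ ≤ 4 e^{1/2} (e^{1/2} − 1) ‖b‖_∞`. -/
theorem l1_ratio_exp_perturbation_bound_small (d : ℕ) (hd : 1 ≤ d) (a b : Fin d → ℝ)
    (ha : ∀ k, 0 < a k) (hb : ‖b‖ ≤ 1 / 2) :
    ∑ k, |a k / (∑ j, |a j|) - a k * Real.exp (b k) / (∑ j, |a j * Real.exp (b j)|)|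
      ≤ 4 * Real.exp (1 / 2) * (Real.exp (1 / 2) - 1) * ‖b‖ := by
  have hβ : ∀ k, |b k| ≤ ‖b‖ := fun k => by
    simpa using norm_le_pi_norm b k
  have hβ0 : 0 ≤ ‖b‖ := norm_nonneg b
  set S := ∑ j, a j with hSdef
  set T := ∑ j, a j * Real.exp (b j) with hTdef
  have hS : 0 < S := Finset.sum_pos (fun j _ => ha j) ⟨⟨0, hd⟩, Finset.mem_univ _⟩
  have hT : 0 < T := Finset.sum_pos (fun j _ => mul_pos (ha j) (Real.exp_pos _))
    ⟨⟨0, hd⟩, Finset.mem_univ _⟩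
  have habsS : (∑ j, |a j|) = S := Finset.sum_congr rfl fun j _ => abs_of_pos (ha j)
  have habsT : (∑ j, |a j * Real.exp (b j)|) = T :=
    Finset.sum_congr rfl fun j _ => abs_of_pos (mul_pos (ha j) (Real.exp_pos _))
  rw [habsS, habsT]
  have hkey : ∀ k, |Real.exp (b k) - 1| ≤ 2 * ‖b‖ := fun k => by
    have h1 : |b k| ≤ 1 := by linarith [hβ k]
    have := Real.abs_exp_sub_one_le h1
    calc |Real.exp (b k) - 1| ≤ 2 * |b k| := this
      _ ≤ 2 * ‖b‖ := by linarith [hβ k]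
  have hTS : |T - S| ≤ 2 * ‖b‖ * S := by
    have hts : T - S = ∑ j, a j * (Real.exp (b j) - 1) := by
      rw [hTdef, hSdef, ← Finset.sum_sub_distrib]
      exact Finset.sum_congr rfl fun j _ => by ring
    rw [hts]
    calc |∑ j, a j * (Real.exp (b j) - 1)| ≤ ∑ j, |a j * (Real.exp (b j) - 1)| :=
          Finset.abs_sum_le_sum_abs _ _
      _ ≤ ∑ j, a j * (2 * ‖b‖) := by
          refine Finset.sum_le_sum fun j _ => ?_
          rw [abs_mul, abs_of_pos (ha j)]
          exact mul_le_mul_of_nonneg_left (hkey j) (ha j).le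
      _ = 2 * ‖b‖ * S := by rw [← Finset.sum_mul]; ring
  have hterm : ∀ k, |a k / S - a k * Real.exp (b k) / T|
      ≤ a k / S * (2 * ‖b‖) + a k * Real.exp (b k) * (|T - S| / (S * T)) := fun k => by
    have hEq : a k / S - a k * Real.exp (b k) / T
        = a k / S * (1 - Real.exp (b k)) + a k * Real.exp (b k) * ((T - S) / (S * T)) := by
      field_simp
      ring
    rw [hEq]
    calc |a k / S * (1 - Real.exp (b k)) + a k * Real.exp (b k) * ((T - S) / (S * T))|
        ≤ |a k / S * (1 - Real.exp (b k))| + |a k * Real.exp (b k) * ((T - S) / (S * T))| :=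
          abs_add_le _ _
      _ ≤ a k / S * (2 * ‖b‖) + a k * Real.exp (b k) * (|T - S| / (S * T)) := by
          rw [abs_mul, abs_mul, abs_of_pos (div_pos (ha k) hS),
            abs_of_pos (mul_pos (ha k) (Real.exp_pos _)), abs_div,
            abs_of_pos (mul_pos hS hT)]
          gcongr
          · exact (div_pos (ha k) hS).le
          · rw [abs_sub_comm]; exact hkey k
  have hsum : ∑ k, |a k / S - a k * Real.exp (b k) / T| ≤ 4 * ‖b‖ := by
    calc ∑ k, |a k / S - a k * Real.exp (b k) / T|
        ≤ ∑ k, (a k / S * (2 * ‖b‖) + a k * Real.exp (b k) * (|T - S| / (S * T))) :=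
          Finset.sum_le_sum fun k _ => hterm k
      _ = (2 * ‖b‖) * (S / S) + (|T - S| / (S * T)) * T := by
          rw [Finset.sum_add_distrib, ← Finset.sum_mul, ← Finset.sum_mul, ← Finset.sum_div]
          ring
      _ = 2 * ‖b‖ + |T - S| / S := by
          rw [div_self hS.ne']
          field_simp
      _ ≤ 2 * ‖b‖ + (2 * ‖b‖ * S) / S := by gcongr
      _ = 4 * ‖b‖ := by field_simp; ring
  refine hsum.trans ?_
  have h1 : Real.exp (1/2) * Real.exp (1/2) = Real.exp 1 := by
    rw [← Real.exp_add]; norm_num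
  have h2 : (2.7182818283 : ℝ) < Real.exp 1 := Real.exp_one_gt_d9
  have h3 : Real.exp (1/2) < 1.7 := by
    nlinarith [Real.exp_one_lt_d9, Real.exp_pos (1/2 : ℝ)]
  nlinarith [Real.exp_pos (1/2 : ℝ)]
end

section
/- (Iteration bound for Stochastic Sinkhorn.) Let n ≥ 1 be an integer and R > 0, ε > 0. Let (δ_k)_{k≥1} and (E_k)_{k≥1} be sequences of nonnegative reals such that for every k ≥ 1: δ_k − δ_{k+1} ≥ E_k²/(28 n) and δ_k ≤ 4 R E_k. If K ≥ 1 is such that E_k > ε for every 1 ≤ k ≤ K, then K ≤ 2 + 224 n R/ε. (Consequently, some iterate k ≤ 2 + 224 n R/ε satisfies E_k ≤ ε.) -/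
/-!
Let `m` be the last `k ≤ K` with `δ_k ≥ 4Rε`. Up to `m` the dual-gap bound turns the progress
bound into `δ_k − δ_{k+1} ≥ δ_k² / (448 n R²)`, so `1/δ_k` grows by `1/(448 n R²)` per step while
`1/δ_m ≤ 1/(4Rε)`: hence `m − 1 ≤ 112 n R/ε`. After `m` the gap starts below `4Rε`, each step
still removes `ε²/(28 n)` from it and it stays nonnegative: hence `K − m ≤ 112 n R/ε`.
-/

open Finset

theorem nsmul_le_sub_of_le_sub_succ {α : Type*} [AddCommGroup α] [PartialOrder α]
    [IsOrderedAddMonoid α] (u : ℕ → α) {c : α} {a b : ℕ} (hab : a ≤ b)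
    (h : ∀ k ∈ Ico a b, c ≤ u (k + 1) - u k) : (b - a) • c ≤ u b - u a := by
  simpa [sum_Ico_sub u hab] using card_nsmul_le_sum (Ico a b) _ c h

theorem inv_le_inv_sub_inv_of_sq_div_le_sub {C x y : ℝ} (hC : 0 < C) (hy : 0 < y)
    (h : x ^ 2 / C ≤ x - y) : C⁻¹ ≤ y⁻¹ - x⁻¹ := by
  have hyx : y ≤ x := by linarith [div_nonneg (sq_nonneg x) hC.le]
  rw [div_le_iff₀ hC] at h
  rw [inv_sub_inv hy.ne' (hy.trans_le hyx).ne', le_div_iff₀ (by nlinarith), inv_mul_le_iff₀ hC]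
  nlinarith

section StochasticSinkhorn

variable {n : ℕ} {R ε : ℝ} {δ E : ℕ → ℝ} {k K m : ℕ}

theorem progress_ge_of_lt (hε : 0 < ε) (hEk : ε < E k)
    (hprog : E k ^ 2 / (28 * n) ≤ δ k - δ (k + 1)) : ε ^ 2 / (28 * n) ≤ δ k - δ (k + 1) := by
  have : ε ^ 2 ≤ E k ^ 2 := pow_le_pow_left₀ hε.le hEk.le 2
  exact (div_le_div_of_nonneg_right this (by positivity)).trans hprog

theorem steps_with_large_gap_le (hn : 1 ≤ n) (hR : 0 < R) (hε : 0 < ε)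
    (hδ : ∀ k, 1 ≤ k → 0 ≤ δ k)
    (hprog : ∀ k, 1 ≤ k → E k ^ 2 / (28 * n) ≤ δ k - δ (k + 1))
    (hgap : ∀ k, 1 ≤ k → δ k ≤ 4 * R * E k) (hEK : ∀ k, 1 ≤ k → k ≤ K → ε < E k)
    (hm : 1 ≤ m) (hmK : m ≤ K) (hδm : 4 * R * ε ≤ δ m) :
    (m : ℝ) - 1 ≤ 112 * n * R / ε := by
  have hn' : (0 : ℝ) < n := by exact_mod_cast hn
  have hpos : ∀ k, 1 ≤ k → k ≤ K → 0 < δ k := by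
    intro k hk hkK
    have hdrop := progress_ge_of_lt hε (hEK k hk hkK) (hprog k hk)
    have hnext := hδ (k + 1) (by omega)
    have : 0 < ε ^ 2 / (28 * n) := by positivity
    linarith
  set C : ℝ := 448 * n * R ^ 2 with hC
  have hCpos : 0 < C := by positivity
  have hstep : ∀ k ∈ Ico 1 m, C⁻¹ ≤ (δ (k + 1))⁻¹ - (δ k)⁻¹ := by
    intro k hk
    rw [mem_Ico] at hk
    refine inv_le_inv_sub_inv_of_sq_div_le_sub hCpos (hpos (k + 1) (by omega) (by omega)) ?_
    have hsq : δ k ^ 2 ≤ (4 * R * E k) ^ 2 :=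
      pow_le_pow_left₀ (hδ k hk.1) (hgap k hk.1) 2
    calc δ k ^ 2 / C ≤ (4 * R * E k) ^ 2 / C := by gcongr
      _ = E k ^ 2 / (28 * n) := by rw [hC]; field_simp; ring
      _ ≤ δ k - δ (k + 1) := hprog k hk.1
  have htel := nsmul_le_sub_of_le_sub_succ (fun k => (δ k)⁻¹) hm hstep
  have hδ1 := inv_nonneg.2 (hδ 1 le_rfl)
  have hδm' : (δ m)⁻¹ ≤ (4 * R * ε)⁻¹ := inv_anti₀ (by positivity) hδm
  rw [nsmul_eq_mul, Nat.cast_sub hm, Nat.cast_one] at htel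
  have : ((m : ℝ) - 1) * C⁻¹ ≤ (4 * R * ε)⁻¹ := by linarith
  rw [← div_eq_mul_inv, div_le_iff₀ hCpos] at this
  calc (m : ℝ) - 1 ≤ (4 * R * ε)⁻¹ * C := this
    _ = 112 * n * R / ε := by rw [hC]; field_simp; ring

theorem steps_with_small_gap_le (hn : 1 ≤ n) (hε : 0 < ε)
    (hδ : ∀ k, 1 ≤ k → 0 ≤ δ k)
    (hprog : ∀ k, 1 ≤ k → E k ^ 2 / (28 * n) ≤ δ k - δ (k + 1))
    (hEK : ∀ k, 1 ≤ k → k ≤ K → ε < E k) (hmK : m ≤ K) (hδm : δ (m + 1) < 4 * R * ε) :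
    (K : ℝ) - m ≤ 112 * n * R / ε := by
  have hstep : ∀ k ∈ Ico (m + 1) (K + 1), ε ^ 2 / (28 * n) ≤ (-δ) (k + 1) - (-δ) k := by
    intro k hk
    rw [mem_Ico] at hk
    rw [Pi.neg_apply, Pi.neg_apply, neg_sub_neg]
    exact progress_ge_of_lt hε (hEK k (by omega) (by omega)) (hprog k (by omega))
  have htel := nsmul_le_sub_of_le_sub_succ (-δ) (by omega) hstep
  rw [nsmul_eq_mul, Pi.neg_apply, Pi.neg_apply, neg_sub_neg,
    Nat.cast_sub (by omega), Nat.cast_add, Nat.cast_add, add_sub_add_right_eq_sub] at htel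
  have hn' : (0 : ℝ) < n := by exact_mod_cast hn
  have h0 := hδ (K + 1) (by omega)
  rw [le_div_iff₀ hε]
  have : ((K : ℝ) - m) * ε ^ 2 ≤ 4 * R * ε * (28 * n) := by
    rw [mul_div_assoc', div_le_iff₀ (by positivity)] at htel; nlinarith
  nlinarith

end StochasticSinkhorn

theorem stochastic_sinkhorn_iteration_bound_general (n : ℕ) (hn : 1 ≤ n) (R ε : ℝ)
    (hR : 0 < R) (hε : 0 < ε) (δ E : ℕ → ℝ)
    (hδ : ∀ k, 1 ≤ k → 0 ≤ δ k)
    (hprog : ∀ k, 1 ≤ k → E k ^ 2 / (28 * n) ≤ δ k - δ (k + 1))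
    (hgap : ∀ k, 1 ≤ k → δ k ≤ 4 * R * E k)
    (K : ℕ) (hEK : ∀ k, 1 ≤ k → k ≤ K → ε < E k) :
    (K : ℝ) ≤ 2 + 224 * n * R / ε := by
  set m := Nat.findGreatest (fun k => 4 * R * ε ≤ δ k) K with hm
  have hmK : m ≤ K := Nat.findGreatest_le K
  have hbound : 0 ≤ 112 * n * R / ε := by positivity
  have hlarge : (m : ℝ) - 1 ≤ 112 * n * R / ε := by
    rcases Nat.eq_zero_or_pos m with hm0 | hm0
    · rw [hm0, Nat.cast_zero]; linarith
    · exact steps_with_large_gap_le hn hR hε hδ hprog hgap hEK hm0 hmK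
        (Nat.findGreatest_of_ne_zero hm.symm hm0.ne')
  have hsmall : (K : ℝ) - m ≤ 112 * n * R / ε := by
    rcases hmK.eq_or_lt with hmK' | hmK'
    · rw [hmK', sub_self]; exact hbound
    · exact steps_with_small_gap_le hn hε hδ hprog hEK hmK
        (not_le.1 (Nat.findGreatest_is_greatest (Nat.lt_succ_self m) hmK'))
  have : 224 * n * R / ε = 2 * (112 * n * R / ε) := by ring
  linarith

/-- Iteration bound for Stochastic Sinkhorn.  If the nonnegative sequences
`δ_k` (expected dual gap) and `E_k` (expected marginal violation) satisfy the per-iteration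
progress bound `δ_k − δ_{k+1} ≥ E_k²/(28 n)` and the dual-gap bound `δ_k ≤ 4 R E_k` for all
`k ≥ 1`, and `E_k > ε` for all `1 ≤ k ≤ K`, then `K ≤ 2 + 224 n R / ε`. -/
theorem stochastic_sinkhorn_iteration_bound (n : ℕ) (hn : 1 ≤ n) (R ε : ℝ)
    (hR : 0 < R) (hε : 0 < ε) (δ E : ℕ → ℝ)
    (hδ : ∀ k, 1 ≤ k → 0 ≤ δ k) (hE : ∀ k, 1 ≤ k → 0 ≤ E k)
    (hprog : ∀ k, 1 ≤ k → E k ^ 2 / (28 * n) ≤ δ k - δ (k + 1))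
    (hgap : ∀ k, 1 ≤ k → δ k ≤ 4 * R * E k)
    (K : ℕ) (hK : 1 ≤ K) (hEK : ∀ k, 1 ≤ k → k ≤ K → ε < E k) :
    (K : ℝ) ≤ 2 + 224 * n * R / ε :=
  stochastic_sinkhorn_iteration_bound_general n hn R ε hR hε δ E hδ hprog hgap K hEK
end
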